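/- For 1 ≤ m ≤ n, Page's mean entropy H̄(m,n) = Σ_{k=n+1}^{mn} 1/k − (m−1)/(2n) is nonnegative. -/

import Mathlib

open scoped BigOperators

/-! Each of the `mn - n` terms of the sum is at least `1/(mn)`, so the sum is at least
`(mn - n)/(mn) = (m - 1)/m`, and `(m - 1)/m ≥ (m - 1)/(2n)` because `m ≤ 2n`. -/

open Finset in
theorem sub_div_le_sum_Icc_one_div (a b : ℕ) :
    ((b : ℝ) - a) / b ≤ ∑ k ∈ Icc (a + 1) b, (1 : ℝ) / k := by
  have hcard : (b : ℝ) - a ≤ #(Icc (a + 1) b) := by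
    rw [Nat.card_Icc, Nat.add_sub_add_right, sub_le_iff_le_add]
    exact_mod_cast le_tsub_add
  calc ((b : ℝ) - a) / b ≤ #(Icc (a + 1) b) • ((1 : ℝ) / b) := by
        rw [nsmul_eq_mul, mul_one_div]
        gcongr
    _ ≤ ∑ k ∈ Icc (a + 1) b, (1 : ℝ) / k := by
        refine card_nsmul_le_sum _ _ _ fun k hk => ?_
        rw [mem_Icc] at hk
        gcongr
        · exact_mod_cast (Nat.succ_pos a).trans_le hk.1
        · exact_mod_cast hk.2

theorem sub_one_div_two_mul_le_mul_sub_div_mul {m n : ℕ} (hm : 1 ≤ m) (hmn : m ≤ 2 * n) :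
    ((m : ℝ) - 1) / (2 * n) ≤ ((m : ℝ) * n - n) / (m * n) := by
  have hm' : (1 : ℝ) ≤ m := by exact_mod_cast hm
  have hmn' : (m : ℝ) ≤ 2 * n := by exact_mod_cast hmn
  have hn : (0 : ℝ) < n := by linarith
  calc ((m : ℝ) - 1) / (2 * n) ≤ ((m : ℝ) - 1) / m := by gcongr
    _ = ((m : ℝ) * n - n) / (m * n) := by field_simp

/-- Page's mean subsystem entropy `H̄(m,n) = ∑_{k=n+1}^{mn} 1/k − (m−1)/(2n)` is nonnegative. -/
theorem page_entropy_nonneg (m n : ℕ) (hm : 1 ≤ m) (hmn : m ≤ n) :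
    0 ≤ (∑ k ∈ Finset.Icc (n + 1) (m * n), (1 : ℝ) / k) - ((m : ℝ) - 1) / (2 * n) := by
  have hsum := sub_div_le_sum_Icc_one_div n (m * n)
  have hm2n : m ≤ 2 * n := hmn.trans (Nat.le_mul_of_pos_left n two_pos)
  have hbound := sub_one_div_two_mul_le_mul_sub_div_mul hm hm2n
  push_cast at hsum
  linarith
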